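/- Let α : F → R_n(G) be the group homomorphism determined by α(f_i) = (g_i, t_i) for i = 1,…,m. An element (g, a_1 t_1 + … + a_m t_m) of R_n(G) belongs to the image of α if and only if 1 − g = Σ_{i=1}^m a_i(1 − g_i) holds in the group ring ℤ_n[G]. In particular, (1, a_1 t_1 + … + a_m t_m) belongs to the image of α if and only if Σ_{i=1}^m a_i(1 − g_i) = 0. -/

import Mathlib

/-- The group `R_n(G)` of pairs `(g,t)` with `g ∈ G` and `t` in the free left
`ℤ_n[G]`-module with basis indexed by `ι`, with multiplication
`(g,t)(h,s) = (gh, g·s+t)` (the semidirect product `T_n ⋊ G`).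
Here `ℤ_n = ZMod n`, so `ℤ_0 = ℤ`. -/
@[ext]
structure MagnusGroup (n : ℕ) (G : Type*) [Group G] (ι : Type*) where
  fst : G
  snd : ι → MonoidAlgebra (ZMod n) G

namespace MagnusGroup

variable {n : ℕ} {G : Type*} [Group G] {ι : Type*}

noncomputable instance : Mul (MagnusGroup n G ι) :=
  ⟨fun a b => ⟨a.fst * b.fst, fun i => MonoidAlgebra.of (ZMod n) G a.fst * b.snd i + a.snd i⟩⟩

noncomputable instance : One (MagnusGroup n G ι) := ⟨⟨1, 0⟩⟩

noncomputable instance : Inv (MagnusGroup n G ι) :=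
  ⟨fun a => ⟨a.fst⁻¹, fun i => -(MonoidAlgebra.of (ZMod n) G a.fst⁻¹ * a.snd i)⟩⟩

@[simp] lemma mul_fst (a b : MagnusGroup n G ι) : (a * b).fst = a.fst * b.fst := rfl
@[simp] lemma mul_snd (a b : MagnusGroup n G ι) (i : ι) :
    (a * b).snd i = MonoidAlgebra.of (ZMod n) G a.fst * b.snd i + a.snd i := rfl
@[simp] lemma one_fst : (1 : MagnusGroup n G ι).fst = 1 := rfl
@[simp] lemma one_snd (i : ι) : (1 : MagnusGroup n G ι).snd i = 0 := rfl
@[simp] lemma inv_fst (a : MagnusGroup n G ι) : (a⁻¹).fst = a.fst⁻¹ := rfl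
@[simp] lemma inv_snd (a : MagnusGroup n G ι) (i : ι) :
    (a⁻¹).snd i = -(MonoidAlgebra.of (ZMod n) G a.fst⁻¹ * a.snd i) := rfl

noncomputable instance : Group (MagnusGroup n G ι) where
  mul_assoc a b c :=
    MagnusGroup.ext (mul_assoc _ _ _)
      (funext fun i => by simp only [mul_fst, mul_snd, map_mul, mul_add, mul_assoc, add_assoc])
  one_mul a :=
    MagnusGroup.ext (one_mul _)
      (funext fun i => by simp only [mul_fst, mul_snd, one_fst, one_snd, map_one, one_mul,
        add_zero, zero_add])
  mul_one a :=
    MagnusGroup.ext (mul_one _)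
      (funext fun i => by simp only [mul_fst, mul_snd, one_fst, one_snd, mul_zero, zero_add])
  inv_mul_cancel a :=
    MagnusGroup.ext (inv_mul_cancel _)
      (funext fun i => by simp only [mul_fst, mul_snd, inv_fst, inv_snd, one_snd,
        add_neg_cancel, neg_add_cancel])

end MagnusGroup

/-- The Magnus–Romanovskii homomorphism `α : F → R_n(G)`, `G = F/R`, sending the `i`-th
free generator `f_i` to `(g_i, t_i)`. -/
noncomputable def magnusHom (m n : ℕ) (R : Subgroup (FreeGroup (Fin m))) [R.Normal] :
    FreeGroup (Fin m) →* MagnusGroup n (FreeGroup (Fin m) ⧸ R) (Fin m) :=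
  FreeGroup.lift fun i =>
    (⟨(QuotientGroup.mk (FreeGroup.of i) : FreeGroup (Fin m) ⧸ R), Pi.single i 1⟩ :
      MagnusGroup n (FreeGroup (Fin m) ⧸ R) (Fin m))

/-!
The solutions `(g, a)` of `1 - g = Σ aᵢ (1 - gᵢ)` form a subgroup of `R_n(G)` containing the
generators `(gᵢ, tᵢ)`, hence the image `H` of `α`. Conversely, since `H` maps onto `G`, the
translations `S = {c | (1, c) ∈ H}` form a `ℤ_n[G]`-submodule, and sending `g` to the class
modulo `S` of the second coordinate of any lift of `g` to `H` is a crossed homomorphism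
`θ : G → T_n/S` with `θ(gᵢ) = [tᵢ]`. Its `ℤ_n`-linear extension `D` to `ℤ_n[G]` satisfies
`D(u (1 - h)) = -u θ(h)`, so applying `D` to the relation gives `θ(g) = [a]`: `(g, a)` differs
from an element of `H` by a translation in `S`.
-/

namespace MagnusGroup

open MonoidAlgebra

variable {n : ℕ} {G : Type*} [Group G] {ι : Type*}

def fstHom : MagnusGroup n G ι →* G where
  toFun := fst
  map_one' := rfl
  map_mul' _ _ := rfl

@[simp] lemma fstHom_apply (x : MagnusGroup n G ι) : fstHom x = x.fst := rfl

lemma mk_one_mul (c : ι → (ZMod n)[G]) (x : MagnusGroup n G ι) :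
    ⟨1, c⟩ * x = ⟨x.fst, x.snd + c⟩ :=
  MagnusGroup.ext (one_mul _) (funext fun i => by rw [mul_snd, map_one, one_mul]; rfl)

lemma mul_inv_eq_mk_one_of_fst_eq {x y : MagnusGroup n G ι} (h : x.fst = y.fst) :
    x * y⁻¹ = ⟨1, x.snd - y.snd⟩ :=
  MagnusGroup.ext (by simp [h]) (funext fun i => by
    simp only [mul_snd, inv_snd, h, mul_neg, ← mul_assoc, ← map_mul, mul_inv_cancel,
      map_one, one_mul, Pi.sub_apply, neg_add_eq_sub])

lemma mul_mk_one_mul_inv (x : MagnusGroup n G ι) (c : ι → (ZMod n)[G]) :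
    x * ⟨1, c⟩ * x⁻¹ = ⟨1, of (ZMod n) G x.fst • c⟩ :=
  MagnusGroup.ext (by simp) (funext fun i => by
    simp only [mul_snd, mul_fst, inv_snd, mul_one, mul_neg,
      ← mul_assoc, ← map_mul, mul_inv_cancel, map_one, one_mul, Pi.smul_apply, smul_eq_mul]
    abel)

section Fox

variable [Fintype ι]

/-- The fundamental formula of Fox calculus, `1 - g = Σᵢ aᵢ (1 - genᵢ)`. -/
def foxSubgroup (gen : ι → G) : Subgroup (MagnusGroup n G ι) where
  carrier := {x | 1 - of (ZMod n) G x.fst = ∑ i, x.snd i * (1 - of (ZMod n) G (gen i))}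
  one_mem' := by simp [← one_def]
  mul_mem' {x y} hx hy := by
    simp only [Set.mem_ofPred_eq, mul_fst, mul_snd, map_mul, add_mul, mul_assoc,
      Finset.sum_add_distrib, ← Finset.mul_sum] at hx hy ⊢
    rw [← hx, ← hy]
    noncomm_ring
  inv_mem' {x} hx := by
    simp only [Set.mem_ofPred_eq, inv_fst, inv_snd, neg_mul, mul_assoc, Finset.sum_neg_distrib,
      ← Finset.mul_sum] at hx ⊢
    rw [← hx, mul_sub, ← map_mul, inv_mul_cancel, map_one, mul_one, neg_sub]

lemma mem_foxSubgroup {gen : ι → G} {x : MagnusGroup n G ι} :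
    x ∈ foxSubgroup gen ↔
      1 - of (ZMod n) G x.fst = ∑ i, x.snd i * (1 - of (ZMod n) G (gen i)) :=
  Iff.rfl

end Fox

variable (H : Subgroup (MagnusGroup n G ι))

noncomputable def translations : AddSubgroup (ι → (ZMod n)[G]) :=
  .ofSub {c | (⟨1, c⟩ : MagnusGroup n G ι) ∈ H} ⟨0, H.one_mem⟩ fun c hc d hd => by
    have := H.mul_mem hc (H.inv_mem hd)
    rwa [mul_inv_eq_mk_one_of_fst_eq (x := ⟨1, c⟩) (y := ⟨1, d⟩) rfl, sub_eq_add_neg] at this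

section Cocycle

variable {H} (hH : ∀ g : G, ∃ x ∈ H, x.fst = g)

/-- Conjugation by lifts of all of `G` makes the translations of `H` a submodule. -/
noncomputable def translationSubmodule : Submodule (ZMod n)[G] (ι → (ZMod n)[G]) :=
  { translations H with
    smul_mem' r c hc := by
      induction r using MonoidAlgebra.induction_on with
      | of g =>
        obtain ⟨x, hx, rfl⟩ := hH g
        have := H.mul_mem (H.mul_mem hx hc) (H.inv_mem hx)
        rwa [mul_mk_one_mul_inv] at this
      | add r s hr hs => rw [add_smul]; exact (translations H).add_mem hr hs
      | smul b r hr =>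
        rw [smul_assoc]
        exact (AddSubgroup.toZModSubmodule n (translations H)).smul_mem b hr }

noncomputable def cocycle (g : G) : (ι → (ZMod n)[G]) ⧸ translationSubmodule hH :=
  Submodule.Quotient.mk (hH g).choose.snd

lemma cocycle_fst {x : MagnusGroup n G ι} (hx : x ∈ H) :
    cocycle hH x.fst = Submodule.Quotient.mk x.snd := by
  obtain ⟨hy, hyx⟩ := (hH x.fst).choose_spec
  refine (Submodule.Quotient.eq _).mpr ?_
  have := H.mul_mem hy (H.inv_mem hx)
  rwa [mul_inv_eq_mk_one_of_fst_eq hyx] at this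

lemma cocycle_mul (g h : G) :
    cocycle hH (g * h) = of (ZMod n) G g • cocycle hH h + cocycle hH g := by
  obtain ⟨x, hx, rfl⟩ := hH g
  obtain ⟨y, hy, rfl⟩ := hH h
  rw [← mul_fst, cocycle_fst hH (H.mul_mem hx hy), cocycle_fst hH hx, cocycle_fst hH hy,
    ← Submodule.Quotient.mk_smul, ← Submodule.Quotient.mk_add]
  rfl

noncomputable def cocycleLinear :
    (ZMod n)[G] →ₗ[ZMod n] (ι → (ZMod n)[G]) ⧸ translationSubmodule hH :=
  (MonoidAlgebra.basis G (ZMod n)).constr (ZMod n) (cocycle hH)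

lemma cocycleLinear_of (g : G) : cocycleLinear hH (of (ZMod n) G g) = cocycle hH g := by
  rw [of_apply, ← basis_apply, cocycleLinear, Module.Basis.constr_basis]

lemma cocycleLinear_mul_of (u : (ZMod n)[G]) (g : G) :
    cocycleLinear hH (u * of (ZMod n) G g) = u • cocycle hH g + cocycleLinear hH u := by
  induction u using MonoidAlgebra.induction_on with
  | of h => rw [← map_mul, cocycleLinear_of, cocycleLinear_of, cocycle_mul]
  | add u v hu hv => rw [add_mul, map_add, map_add, hu, hv, add_smul]; abel
  | smul b u hu => rw [smul_mul_assoc, map_smul, hu, map_smul, smul_add, smul_assoc]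

lemma cocycleLinear_mul_one_sub_of (u : (ZMod n)[G]) (g : G) :
    cocycleLinear hH (u * (1 - of (ZMod n) G g)) = -(u • cocycle hH g) := by
  rw [mul_sub, mul_one, map_sub, cocycleLinear_mul_of]
  abel

end Cocycle

theorem mem_of_mem_foxSubgroup [Fintype ι] [DecidableEq ι] {H : Subgroup (MagnusGroup n G ι)}
    (hH : ∀ g : G, ∃ x ∈ H, x.fst = g) {gen : ι → G}
    (hgen : ∀ i, (⟨gen i, Pi.single i 1⟩ : MagnusGroup n G ι) ∈ H)
    {x : MagnusGroup n G ι} (hx : x ∈ foxSubgroup gen) : x ∈ H := by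
  have hcocycle : cocycle hH x.fst = Submodule.Quotient.mk x.snd := by
    have h := congrArg (cocycleLinear hH) hx
    rw [← one_mul (1 - _), map_sum] at h
    simp only [cocycleLinear_mul_one_sub_of, one_smul, Finset.sum_neg_distrib, neg_inj] at h
    conv_rhs => rw [pi_eq_sum_univ' x.snd, ← Submodule.mkQ_apply, map_sum]
    rw [h]
    refine Finset.sum_congr rfl fun i _ => ?_
    rw [cocycle_fst hH (hgen i), map_smul, Submodule.mkQ_apply]
  obtain ⟨y, hy, hyx⟩ := hH x.fst
  have hxy : x.snd - y.snd ∈ translationSubmodule hH := by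
    rw [← Submodule.Quotient.eq, ← hcocycle, ← hyx, cocycle_fst hH hy]
  refine (H.mul_mem_cancel_right (H.inv_mem hy)).mp ?_
  rw [mul_inv_eq_mk_one_of_fst_eq hyx.symm]
  exact hxy

noncomputable def magnusLift [DecidableEq ι] (gen : ι → G) : FreeGroup ι →* MagnusGroup n G ι :=
  FreeGroup.lift fun i => ⟨gen i, Pi.single i 1⟩

lemma fstHom_comp_magnusLift [DecidableEq ι] (gen : ι → G) :
    fstHom.comp (magnusLift (n := n) gen) = FreeGroup.lift gen :=
  FreeGroup.ext_hom _ _ fun i => by simp [magnusLift]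

theorem mem_range_magnusLift_iff [Fintype ι] [DecidableEq ι] {gen : ι → G}
    (hgen : Function.Surjective (FreeGroup.lift gen)) {x : MagnusGroup n G ι} :
    x ∈ (magnusLift gen).range ↔ x ∈ foxSubgroup gen := by
  refine ⟨fun hx => FreeGroup.range_lift_le ?_ hx, fun hx => ?_⟩
  · rintro _ ⟨i, rfl⟩
    simp [foxSubgroup, Pi.single_apply]
  · refine mem_of_mem_foxSubgroup (H := (magnusLift gen).range) (fun g => ?_)
      (fun i => ⟨.of i, FreeGroup.lift_apply_of⟩) hx
    obtain ⟨w, rfl⟩ := hgen g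
    exact ⟨magnusLift gen w, ⟨w, rfl⟩, DFunLike.congr_fun (fstHom_comp_magnusLift gen) w⟩

end MagnusGroup

lemma FreeGroup.lift_mk_of_surjective {ι : Type*} (R : Subgroup (FreeGroup ι)) [R.Normal] :
    Function.Surjective (FreeGroup.lift fun i => (QuotientGroup.mk (of i) : FreeGroup ι ⧸ R)) := by
  rw [show FreeGroup.lift _ = QuotientGroup.mk' R from ext_hom _ _ fun i => by simp]
  exact QuotientGroup.mk'_surjective R

/-- An element `(g, Σ aᵢ tᵢ)` of `R_n(G)` lies in the image of `α` iff
`1 - g = Σᵢ aᵢ (1 - gᵢ)` in the group ring `ℤ_n[G]`; in particular `(1, Σ aᵢ tᵢ)` lies in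
the image iff `Σᵢ aᵢ (1 - gᵢ) = 0`. -/
theorem magnusHom_range (m n : ℕ) (R : Subgroup (FreeGroup (Fin m))) [R.Normal] :
    (∀ (g : FreeGroup (Fin m) ⧸ R)
        (a : Fin m → MonoidAlgebra (ZMod n) (FreeGroup (Fin m) ⧸ R)),
      (⟨g, a⟩ : MagnusGroup n (FreeGroup (Fin m) ⧸ R) (Fin m)) ∈ (magnusHom m n R).range ↔
        1 - MonoidAlgebra.of (ZMod n) (FreeGroup (Fin m) ⧸ R) g =
          ∑ i : Fin m, a i *
            (1 - MonoidAlgebra.of (ZMod n) (FreeGroup (Fin m) ⧸ R)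
              (QuotientGroup.mk (FreeGroup.of i)))) ∧
    (∀ a : Fin m → MonoidAlgebra (ZMod n) (FreeGroup (Fin m) ⧸ R),
      (⟨1, a⟩ : MagnusGroup n (FreeGroup (Fin m) ⧸ R) (Fin m)) ∈ (magnusHom m n R).range ↔
        ∑ i : Fin m, a i *
          (1 - MonoidAlgebra.of (ZMod n) (FreeGroup (Fin m) ⧸ R)
            (QuotientGroup.mk (FreeGroup.of i))) = 0) := by
  have hrange (x) : x ∈ (magnusHom m n R).range ↔ x ∈ MagnusGroup.foxSubgroup _ :=
    MagnusGroup.mem_range_magnusLift_iff (FreeGroup.lift_mk_of_surjective R)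
  refine ⟨fun g a => hrange _, fun a => ?_⟩
  rw [hrange, MagnusGroup.mem_foxSubgroup, map_one, sub_self, eq_comm]
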